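/- Under the assumptions that the dual problem max{θ(λ,μ) : μ ≥ 0, λ = Ay − b, y ∈ Aff(Y)} attains optimal value f*, Slater's condition holds with y₀ ∈ ri(Y), g(y₀) ≤ −κ𝟙, Ay₀ = b, and for any ε-optimal dual solution (λ(ε), μ(ε)) and any point ȳ ∈ Y with Aȳ − b = z(ε) := −(ρ*/‖λ(ε)‖)λ(ε) (or z(ε)=0 if λ(ε)=0) and ‖ȳ − y₀‖ ≤ r ≤ κ/(2L(g)): θ(λ(ε), μ(ε)) ≤ f(y₀) + L(f)·r − ρ*‖λ(ε)‖ − (κ/2)‖μ(ε)‖₁. -/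

import Mathlib

open Matrix Classical
open scoped RealInnerProductSpace

/-! Evaluate the infimum defining `θ` at `ȳ`. The `f`-term is at most `f(y₀) + L(f)·r` by the
Lipschitz bound. The `λ`-term equals `⟨λ, z(ε)⟩ = −ρ*‖λ‖`. Each `g_i(ȳ) ≤ −κ + L(g)·r ≤ −κ/2`,
so with `μ ≥ 0` the `μ`-term is at most `−(κ/2)‖μ‖₁`. -/

lemma le_add_mul_of_abs_sub_le {a b L d r : ℝ} (hL : 0 ≤ L) (hab : |a - b| ≤ L * d)
    (hdr : d ≤ r) : a ≤ b + L * r := by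
  nlinarith [(abs_le.mp hab).2]

lemma EuclideanSpace.dotProduct_self_eq_norm_sq {ι : Type*} [Fintype ι]
    (x : EuclideanSpace ℝ ι) : x.ofLp ⬝ᵥ x.ofLp = ‖x‖ ^ 2 := by
  rw [← real_inner_self_eq_norm_sq, EuclideanSpace.inner_eq_star_dotProduct, star_trivial]

lemma EuclideanSpace.dotProduct_ite_smul_self {ι : Type*} [Fintype ι]
    (x : EuclideanSpace ℝ ι) (ρ : ℝ) :
    x.ofLp ⬝ᵥ (if x = 0 then 0 else -(ρ / ‖x‖) • x : EuclideanSpace ℝ ι).ofLp = -(ρ * ‖x‖) := by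
  split_ifs with hx
  · simp [hx]
  · have hx' : ‖x‖ ≠ 0 := norm_ne_zero_iff.mpr hx
    rw [WithLp.ofLp_smul, dotProduct_smul, smul_eq_mul, dotProduct_self_eq_norm_sq]
    field_simp

lemma dotProduct_le_neg_mul_sum_abs {ι : Type*} [Fintype ι] {μ v : ι → ℝ} {c : ℝ}
    (hμ : 0 ≤ μ) (hv : ∀ i, v i ≤ -c) : μ ⬝ᵥ v ≤ -(c * ∑ i, |μ i|) := by
  calc μ ⬝ᵥ v ≤ ∑ i, μ i * -c :=
        Finset.sum_le_sum fun i _ => mul_le_mul_of_nonneg_left (hv i) (hμ i)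
    _ = -(c * ∑ i, |μ i|) := by
        simp only [abs_of_nonneg (hμ _), Finset.mul_sum]
        simp only [mul_neg, Finset.sum_neg_distrib, mul_comm]

theorem stmt_11_general {n q p : ℕ}
    (Y : Set (EuclideanSpace ℝ (Fin n)))
    (A : Matrix (Fin q) (Fin n) ℝ) (b : Fin q → ℝ)
    (f : EuclideanSpace ℝ (Fin n) → ℝ)
    (g : EuclideanSpace ℝ (Fin n) → Fin p → ℝ)
    (Lf : ℝ) (hLf : 0 ≤ Lf)
    (hflip : ∀ y₁ ∈ Y, ∀ y₂ ∈ Y, |f y₁ - f y₂| ≤ Lf * ‖y₁ - y₂‖)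
    (Lg : ℝ) (hLg : 0 < Lg)
    (hglip : ∀ i, ∀ y₁ ∈ Y, ∀ y₂ ∈ Y, |g y₁ i - g y₂ i| ≤ Lg * ‖y₁ - y₂‖)
    -- Slater condition:
    (κ : ℝ)
    (y₀ : EuclideanSpace ℝ (Fin n)) (hy₀ : y₀ ∈ intrinsicInterior ℝ Y)
    (hy₀g : ∀ i, g y₀ i ≤ -κ)
    (r : ℝ) (hrκ : r ≤ κ / (2 * Lg))
    (ρstar : ℝ)
    -- (λ(ε), μ(ε)) is a feasible dual point:
    (lam : EuclideanSpace ℝ (Fin q)) (mu : Fin p → ℝ) (hmu : 0 ≤ mu)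
    -- θ(λ(ε), μ(ε)) is the value of the dual function at (λ(ε), μ(ε)):
    (θval : ℝ)
    (hθ : IsGLB {v : ℝ | ∃ y ∈ Y, v = f y + lam ⬝ᵥ (A *ᵥ y - b) + mu ⬝ᵥ g y} θval)
    -- ȳ ∈ Y with Aȳ − b = z(ε) and ‖ȳ − y₀‖ ≤ r:
    (ybar : EuclideanSpace ℝ (Fin n)) (hybarY : ybar ∈ Y)
    (hybarr : ‖ybar - y₀‖ ≤ r)
    (hybarz : (A *ᵥ ybar - b : Fin q → ℝ) =
      (if lam = 0 then 0 else -(ρstar / ‖lam‖) • lam : EuclideanSpace ℝ (Fin q))) :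
    θval ≤ f y₀ + Lf * r - ρstar * ‖lam‖ - (κ / 2) * (∑ i, |mu i|) := by
  have hy₀Y : y₀ ∈ Y := intrinsicInterior_subset hy₀
  have hθ_le : θval ≤ f ybar + lam ⬝ᵥ (A *ᵥ ybar - b) + mu ⬝ᵥ g ybar :=
    hθ.1 ⟨ybar, hybarY, rfl⟩
  have hf : f ybar ≤ f y₀ + Lf * r :=
    le_add_mul_of_abs_sub_le hLf (hflip ybar hybarY y₀ hy₀Y) hybarr
  have hlam : lam ⬝ᵥ (A *ᵥ ybar - b) = -(ρstar * ‖lam‖) := by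
    rw [hybarz, EuclideanSpace.dotProduct_ite_smul_self]
  have hg : ∀ i, g ybar i ≤ -(κ / 2) := fun i => by
    have hLgr : Lg * r ≤ κ / 2 := by
      rw [le_div_iff₀ (by positivity : (0 : ℝ) < 2 * Lg)] at hrκ
      linarith
    linarith [le_add_mul_of_abs_sub_le hLg.le (hglip i ybar hybarY y₀ hy₀Y) hybarr, hy₀g i]
  linarith [dotProduct_le_neg_mul_sum_abs hmu hg]

/-- Key inequality in the proof of the ε-optimal dual norm bound: for a dual
point (λ(ε), μ(ε)) and the point ȳ ∈ Y realizing z(ε) = −(ρ*/‖λ(ε)‖)λ(ε),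
θ(λ(ε), μ(ε)) ≤ f(y₀) + L(f)·r − ρ*‖λ(ε)‖ − (κ/2)‖μ(ε)‖₁. -/
theorem stmt_11 {n q p : ℕ}
    (Y : Set (EuclideanSpace ℝ (Fin n))) (hYcl : IsClosed Y) (hYconv : Convex ℝ Y)
    (A : Matrix (Fin q) (Fin n) ℝ) (b : Fin q → ℝ)
    (f : EuclideanSpace ℝ (Fin n) → ℝ)
    (g : EuclideanSpace ℝ (Fin n) → Fin p → ℝ)
    (hfconv : ConvexOn ℝ Y f)
    (Lf : ℝ) (hLf : 0 ≤ Lf)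
    (hflip : ∀ y₁ ∈ Y, ∀ y₂ ∈ Y, |f y₁ - f y₂| ≤ Lf * ‖y₁ - y₂‖)
    (hgconv : ∀ i, ConvexOn ℝ Y (fun y => g y i))
    (Lg : ℝ) (hLg : 0 < Lg)
    (hglip : ∀ i, ∀ y₁ ∈ Y, ∀ y₂ ∈ Y, |g y₁ i - g y₂ i| ≤ Lg * ‖y₁ - y₂‖)
    -- Slater condition:
    (κ : ℝ) (hκ : 0 < κ)
    (y₀ : EuclideanSpace ℝ (Fin n)) (hy₀ : y₀ ∈ intrinsicInterior ℝ Y)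
    (hy₀g : ∀ i, g y₀ i ≤ -κ) (hy₀A : A *ᵥ y₀ = b)
    (r : ℝ) (hr : 0 < r) (hrκ : r ≤ κ / (2 * Lg))
    (ρstar : ℝ) (hρstar : 0 < ρstar)
    -- (λ(ε), μ(ε)) is a feasible dual point:
    (lam : EuclideanSpace ℝ (Fin q)) (mu : Fin p → ℝ) (hmu : 0 ≤ mu)
    (hlamfeas : ∃ y ∈ (affineSpan ℝ Y : Set (EuclideanSpace ℝ (Fin n))),
      lam = (A *ᵥ y - b : Fin q → ℝ))
    -- θ(λ(ε), μ(ε)) is the value of the dual function at (λ(ε), μ(ε)):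
    (θval : ℝ)
    (hθ : IsGLB {v : ℝ | ∃ y ∈ Y, v = f y + lam ⬝ᵥ (A *ᵥ y - b) + mu ⬝ᵥ g y} θval)
    -- ȳ ∈ Y with Aȳ − b = z(ε) and ‖ȳ − y₀‖ ≤ r:
    (ybar : EuclideanSpace ℝ (Fin n)) (hybarY : ybar ∈ Y)
    (hybarr : ‖ybar - y₀‖ ≤ r)
    (hybarz : (A *ᵥ ybar - b : Fin q → ℝ) =
      (if lam = 0 then 0 else -(ρstar / ‖lam‖) • lam : EuclideanSpace ℝ (Fin q))) :
    θval ≤ f y₀ + Lf * r - ρstar * ‖lam‖ - (κ / 2) * (∑ i, |mu i|) :=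
  stmt_11_general Y A b f g Lf hLf hflip Lg hLg hglip κ y₀ hy₀ hy₀g r hrκ ρstar lam mu hmu θval hθ
    ybar hybarY hybarr hybarz
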